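/- Let f : B₁ → ℝ³ be a continuously differentiable vector field on the open unit ball B₁ ⊂ ℝ³ with div f = 0 on B₁. Then the vector field F defined by F(x) = −∫₀¹ t (x × f(tx)) dt is differentiable on B₁, and ∇ × F = f on B₁. -/

import Mathlib

open MeasureTheory Metric

/-- The cross product on `ℝ³` (as `EuclideanSpace ℝ (Fin 3)`). -/
noncomputable def cross3 (a b : EuclideanSpace ℝ (Fin 3)) : EuclideanSpace ℝ (Fin 3) :=
  (WithLp.equiv 2 (Fin 3 → ℝ)).symm
    ![a 1 * b 2 - a 2 * b 1, a 2 * b 0 - a 0 * b 2, a 0 * b 1 - a 1 * b 0]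

/-- The partial derivative `∂_j F_k` of a vector field on `ℝ³`. -/
noncomputable def pd (F : EuclideanSpace ℝ (Fin 3) → EuclideanSpace ℝ (Fin 3)) (j k : Fin 3)
    (x : EuclideanSpace ℝ (Fin 3)) : ℝ :=
  fderiv ℝ (fun y => F y k) x (EuclideanSpace.single j 1)

/-- The curl `∇ × F` of a vector field on `ℝ³`. -/
noncomputable def curl3 (F : EuclideanSpace ℝ (Fin 3) → EuclideanSpace ℝ (Fin 3))
    (x : EuclideanSpace ℝ (Fin 3)) : EuclideanSpace ℝ (Fin 3) :=
  (WithLp.equiv 2 (Fin 3 → ℝ)).symm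
    ![pd F 1 2 x - pd F 2 1 x, pd F 2 0 x - pd F 0 2 x, pd F 0 1 x - pd F 1 0 x]

abbrev E3 := EuclideanSpace ℝ (Fin 3)

lemma cross3_zero (a b : E3) : cross3 a b 0 = a 1 * b 2 - a 2 * b 1 := rfl
lemma cross3_one (a b : E3) : cross3 a b 1 = a 2 * b 0 - a 0 * b 2 := rfl
lemma cross3_two (a b : E3) : cross3 a b 2 = a 0 * b 1 - a 1 * b 0 := rfl

noncomputable def crossB : E3 →ₗ[ℝ] E3 →ₗ[ℝ] E3 :=
  LinearMap.mk₂ ℝ cross3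
    (fun a a' b => by ext i; fin_cases i <;>
      simp [cross3, PiLp.add_apply] <;> ring)
    (fun c a b => by ext i; fin_cases i <;>
      simp [cross3, PiLp.smul_apply, smul_eq_mul] <;> ring)
    (fun a b b' => by ext i; fin_cases i <;>
      simp [cross3, PiLp.add_apply] <;> ring)
    (fun c a b => by ext i; fin_cases i <;>
      simp [cross3, PiLp.smul_apply, smul_eq_mul] <;> ring)

noncomputable def crossL : E3 →L[ℝ] E3 →L[ℝ] E3 :=
  LinearMap.toContinuousLinearMap
    { toFun := fun a => LinearMap.toContinuousLinearMap (crossB a)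
      map_add' := fun a a' => by ext b; simp [crossB]
      map_smul' := fun c a => by ext b; simp [crossB] }

lemma crossL_apply (a b : E3) : crossL a b = cross3 a b := rfl

noncomputable def Kd (f : E3 → E3) (t : ℝ) (x : E3) : E3 →L[ℝ] E3 :=
  t • ((crossL x).comp ((fderiv ℝ f (t • x)).comp (t • ContinuousLinearMap.id ℝ E3)) +
    crossL.flip (f (t • x)))

lemma mem_ball_smul {t : ℝ} {x : E3} (ht : t ∈ Set.Icc (0:ℝ) 1) (hx : x ∈ ball (0:E3) 1) :
    t • x ∈ ball (0:E3) 1 := by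
  rw [mem_ball_zero_iff] at hx ⊢
  calc ‖t • x‖ = |t| * ‖x‖ := by rw [norm_smul, Real.norm_eq_abs]
  _ ≤ 1 * ‖x‖ := by
      apply mul_le_mul_of_nonneg_right _ (norm_nonneg x)
      rw [abs_le]; constructor <;> linarith [ht.1, ht.2]
  _ < 1 := by simpa using hx

lemma hasFDerivAt_integrand {f : E3 → E3} (hf : ContDiffOn ℝ 1 f (ball (0:E3) 1))
    {t : ℝ} {x : E3} (hx : t • x ∈ ball (0:E3) 1) :
    HasFDerivAt (fun y => t • cross3 y (f (t • y))) (Kd f t x) x := by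
  have hdf : DifferentiableAt ℝ f (t • x) :=
    (hf.differentiableOn one_ne_zero).differentiableAt (isOpen_ball.mem_nhds hx)
  have h1 : HasFDerivAt (fun y : E3 => t • y) (t • ContinuousLinearMap.id ℝ E3) x :=
    (hasFDerivAt_id x).const_smul t
  have h2 : HasFDerivAt (fun y => f (t • y))
      ((fderiv ℝ f (t • x)).comp (t • ContinuousLinearMap.id ℝ E3)) x :=
    (hdf.hasFDerivAt).comp x h1
  have h3 := (crossL.hasFDerivAt (x := x)).clm_apply h2
  exact h3.const_smul t

lemma continuousOn_integrand {f : E3 → E3} (hf : ContDiffOn ℝ 1 f (ball (0:E3) 1))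
    {x : E3} {s : Set ℝ} (hs : ∀ t ∈ s, t • x ∈ ball (0:E3) 1) :
    ContinuousOn (fun t : ℝ => t • cross3 x (f (t • x))) s := by
  have hsm : ContinuousOn (fun t : ℝ => t • x) s :=
    (continuous_id.smul continuous_const).continuousOn
  have hfc : ContinuousOn (fun t => f (t • x)) s :=
    (hf.continuousOn).comp hsm hs
  show ContinuousOn (fun t : ℝ => t • (crossL x) (f (t • x))) s
  exact continuousOn_id.smul ((crossL x).continuous.comp_continuousOn hfc)

lemma continuousOn_Kd {f : E3 → E3} (hf : ContDiffOn ℝ 1 f (ball (0:E3) 1))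
    {x : E3} {s : Set ℝ} (hs : ∀ t ∈ s, t • x ∈ ball (0:E3) 1) :
    ContinuousOn (fun t => Kd f t x) s := by
  have hsm : ContinuousOn (fun t : ℝ => t • x) s :=
    (continuous_id.smul continuous_const).continuousOn
  have hfc : ContinuousOn (fun t => f (t • x)) s :=
    (hf.continuousOn).comp hsm hs
  have hf'c : ContinuousOn (fun t => fderiv ℝ f (t • x)) s :=
    (hf.continuousOn_fderiv_of_isOpen isOpen_ball le_rfl).comp hsm hs
  have h1 : ContinuousOn (fun t : ℝ =>
      (fderiv ℝ f (t • x)).comp (t • ContinuousLinearMap.id ℝ E3)) s :=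
    hf'c.clm_comp (continuousOn_id.smul continuousOn_const)
  have h2 : ContinuousOn (fun t : ℝ =>
      (crossL x).comp ((fderiv ℝ f (t • x)).comp (t • ContinuousLinearMap.id ℝ E3))) s :=
    continuousOn_const.clm_comp h1
  have h3 : ContinuousOn (fun t => crossL.flip (f (t • x))) s :=
    (crossL.flip).continuous.comp_continuousOn hfc
  exact continuousOn_id.smul (h2.add h3)

lemma uIoc_sub_Icc : Set.uIoc (0:ℝ) 1 ⊆ Set.Icc (0:ℝ) 1 := by
  rw [Set.uIoc_of_le zero_le_one]; exact Set.Ioc_subset_Icc_self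

lemma key {f : E3 → E3} (hf : ContDiffOn ℝ 1 f (ball (0:E3) 1))
    {x₀ : E3} (hx₀ : x₀ ∈ ball (0:E3) 1) :
    HasFDerivAt (fun x => ∫ t in (0:ℝ)..1, t • cross3 x (f (t • x)))
      (∫ t in (0:ℝ)..1, Kd f t x₀) x₀ := by
  have hx₀n : ‖x₀‖ < 1 := mem_ball_zero_iff.mp hx₀
  set r : ℝ := (1 + ‖x₀‖) / 2 with hr
  set ε : ℝ := (1 - ‖x₀‖) / 2 with hεdef
  have hε : 0 < ε := by rw [hεdef]; linarith
  have hr0 : (0:ℝ) ≤ r := by rw [hr]; positivity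
  have hr1 : r < 1 := by rw [hr]; linarith
  have hball : ∀ x ∈ ball x₀ ε, ‖x‖ < r := by
    intro x hx
    have : ‖x - x₀‖ < ε := by rwa [mem_ball, dist_eq_norm] at hx
    calc ‖x‖ = ‖x₀ + (x - x₀)‖ := by rw [add_sub_cancel]
    _ ≤ ‖x₀‖ + ‖x - x₀‖ := norm_add_le _ _
    _ < ‖x₀‖ + ε := by linarith
    _ = r := by rw [hεdef, hr]; ring
  have hmem : ∀ t ∈ Set.Icc (0:ℝ) 1, ∀ x ∈ ball x₀ ε, t • x ∈ ball (0:E3) 1 := fun t ht x hx =>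
    mem_ball_smul ht (mem_ball_zero_iff.mpr ((hball x hx).trans hr1))
  have hcb : closedBall (0:E3) r ⊆ ball (0:E3) 1 := closedBall_subset_ball hr1
  obtain ⟨M, hM⟩ := (isCompact_closedBall (0:E3) r).exists_bound_of_continuousOn
    (hf.continuousOn.mono hcb)
  obtain ⟨M', hM'⟩ := (isCompact_closedBall (0:E3) r).exists_bound_of_continuousOn
    ((hf.continuousOn_fderiv_of_isOpen isOpen_ball le_rfl).mono hcb)
  have hM0 : 0 ≤ M := le_trans (norm_nonneg _) (hM 0 (mem_closedBall_self hr0))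
  have hM'0 : 0 ≤ M' := le_trans (norm_nonneg _) (hM' 0 (mem_closedBall_self hr0))
  apply intervalIntegral.hasFDerivAt_integral_of_dominated_of_fderiv_le
    (bound := fun _ => ‖crossL‖ * r * M' + ‖crossL‖ * M) (F' := fun x t => Kd f t x) (ball_mem_nhds x₀ hε)
  · filter_upwards [ball_mem_nhds x₀ hε] with x hx
    exact ((continuousOn_integrand hf (fun t ht => hmem t (uIoc_sub_Icc ht) x hx)).mono
      (subset_refl _)).aestronglyMeasurable measurableSet_uIoc
  · exact (continuousOn_integrand hf
      (fun t ht => hmem t (by rwa [Set.uIcc_of_le zero_le_one] at ht) x₀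
        (mem_ball_self hε))).intervalIntegrable
  · exact (continuousOn_Kd hf
      (fun t ht => hmem t (uIoc_sub_Icc ht) x₀ (mem_ball_self hε))).aestronglyMeasurable
      measurableSet_uIoc
  · apply Filter.Eventually.of_forall
    intro t ht x hx
    have ht' : t ∈ Set.Icc (0:ℝ) 1 := uIoc_sub_Icc ht
    have habs : |t| ≤ 1 := abs_le.mpr ⟨by linarith [ht'.1], ht'.2⟩
    have hxr : ‖x‖ < r := hball x hx
    have htx : t • x ∈ closedBall (0:E3) r := by
      rw [mem_closedBall_zero_iff, norm_smul, Real.norm_eq_abs]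
      nlinarith [norm_nonneg x, abs_nonneg t]
    have hfb := hM _ htx
    have hLb := hM' _ htx
    have e1 := ContinuousLinearMap.opNorm_comp_le (crossL x)
      ((fderiv ℝ f (t • x)).comp (t • ContinuousLinearMap.id ℝ E3))
    have e2 := ContinuousLinearMap.opNorm_comp_le (fderiv ℝ f (t • x))
      (t • ContinuousLinearMap.id ℝ E3)
    have e3 := crossL.le_opNorm x
    have e4 : ‖crossL.flip (f (t • x))‖ ≤ ‖crossL‖ * ‖f (t • x)‖ := by
      simpa [ContinuousLinearMap.opNorm_flip] using (crossL.flip).le_opNorm (f (t • x))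
    have e5 : ‖t • ContinuousLinearMap.id ℝ E3‖ ≤ |t| := by
      refine le_trans (ContinuousLinearMap.opNorm_smul_le t _) ?_
      rw [Real.norm_eq_abs]
      exact mul_le_of_le_one_right (abs_nonneg t) ContinuousLinearMap.norm_id_le
    have e6 : ‖Kd f t x‖ ≤ |t| * (‖(crossL x).comp ((fderiv ℝ f (t • x)).comp
        (t • ContinuousLinearMap.id ℝ E3))‖ + ‖crossL.flip (f (t • x))‖) := by
      rw [Kd]
      refine le_trans (ContinuousLinearMap.opNorm_smul_le t _) ?_
      rw [Real.norm_eq_abs]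
      exact mul_le_mul_of_nonneg_left (norm_add_le _ _) (abs_nonneg t)
    have hc0 : (0:ℝ) ≤ ‖crossL‖ := ContinuousLinearMap.opNorm_nonneg crossL
    have i1 : ‖(fderiv ℝ f (t • x)).comp (t • ContinuousLinearMap.id ℝ E3)‖ ≤ M' := by
      refine le_trans e2 ?_
      calc ‖fderiv ℝ f (t • x)‖ * ‖t • ContinuousLinearMap.id ℝ E3‖ ≤ M' * |t| :=
        mul_le_mul hLb e5 (norm_nonneg _) hM'0
      _ ≤ M' * 1 := mul_le_mul_of_nonneg_left habs hM'0
      _ = M' := mul_one _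
    have i2 : ‖crossL x‖ ≤ ‖crossL‖ * r := le_trans e3 (mul_le_mul_of_nonneg_left hxr.le hc0)
    have i3 : ‖(crossL x).comp ((fderiv ℝ f (t • x)).comp
        (t • ContinuousLinearMap.id ℝ E3))‖ ≤ ‖crossL‖ * r * M' :=
      le_trans e1 (mul_le_mul i2 i1 (norm_nonneg _) (by positivity))
    have i4 : ‖crossL.flip (f (t • x))‖ ≤ ‖crossL‖ * M :=
      le_trans e4 (mul_le_mul_of_nonneg_left hfb hc0)
    refine le_trans e6 ?_
    calc |t| * (‖(crossL x).comp ((fderiv ℝ f (t • x)).comp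
          (t • ContinuousLinearMap.id ℝ E3))‖ + ‖crossL.flip (f (t • x))‖)
        ≤ 1 * (‖crossL‖ * r * M' + ‖crossL‖ * M) :=
      mul_le_mul habs (add_le_add i3 i4) (by positivity) one_pos.le
    _ = ‖crossL‖ * r * M' + ‖crossL‖ * M := one_mul _
  · exact intervalIntegrable_const
  · apply Filter.Eventually.of_forall
    intro t ht x hx
    exact hasFDerivAt_integrand hf (hmem t (uIoc_sub_Icc ht) x hx)

lemma pd_eq_of_hasFDerivAt {G : E3 → E3} {D : E3 →L[ℝ] E3} {x : E3}
    (h : HasFDerivAt G D x) (j k : Fin 3) :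
    pd G j k x = (D (EuclideanSpace.single j 1)) k := by
  have h2 : HasFDerivAt (fun y => G y k) ((EuclideanSpace.proj k).comp D) x := by
    exact (EuclideanSpace.proj k).hasFDerivAt.comp x h
  rw [pd, h2.fderiv]; rfl

lemma pd_f {f : E3 → E3} (hf : ContDiffOn ℝ 1 f (ball (0:E3) 1)) {y : E3}
    (hy : y ∈ ball (0:E3) 1) (j k : Fin 3) :
    pd f j k y = (fderiv ℝ f y (EuclideanSpace.single j 1)) k :=
  pd_eq_of_hasFDerivAt
    (((hf.differentiableOn one_ne_zero).differentiableAt (isOpen_ball.mem_nhds hy)).hasFDerivAt) j k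

lemma clm_apply_coord (L : E3 →L[ℝ] E3) (v : E3) (i : Fin 3) :
    L v i = v 0 * L (EuclideanSpace.single 0 1) i + v 1 * L (EuclideanSpace.single 1 1) i
      + v 2 * L (EuclideanSpace.single 2 1) i := by
  have hv : v = v 0 • EuclideanSpace.single 0 (1:ℝ) + v 1 • EuclideanSpace.single 1 1
      + v 2 • EuclideanSpace.single 2 1 := by
    ext m
    fin_cases m <;>
      simp [EuclideanSpace.single_apply, PiLp.add_apply, PiLp.smul_apply]
  conv_lhs => rw [hv]
  simp [PiLp.add_apply, PiLp.smul_apply, smul_eq_mul]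

lemma Kd_apply (f : E3 → E3) (t : ℝ) (x v : E3) (k : Fin 3) :
    (Kd f t x v) k
      = t * (cross3 x (fderiv ℝ f (t • x) (t • v)) k + cross3 v (f (t • x)) k) := by
  simp [Kd, ContinuousLinearMap.smul_apply, ContinuousLinearMap.add_apply,
    ContinuousLinearMap.comp_apply, ContinuousLinearMap.flip_apply,
    ContinuousLinearMap.id_apply, crossL_apply, PiLp.smul_apply, PiLp.add_apply, smul_eq_mul]
  fin_cases k <;>
    simp [cross3_zero, cross3_one, cross3_two, PiLp.smul_apply, smul_eq_mul] <;> ring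

lemma ftc {f : E3 → E3} (hf : ContDiffOn ℝ 1 f (ball (0:E3) 1)) {x₀ : E3}
    (hx₀ : x₀ ∈ ball (0:E3) 1) (i : Fin 3) :
    ∫ t in (0:ℝ)..1, (2*t*(f (t•x₀) i) + t^2 * ((fderiv ℝ f (t•x₀)) x₀ i)) = f x₀ i := by
  have hmem : ∀ t ∈ Set.uIcc (0:ℝ) 1, t • x₀ ∈ ball (0:E3) 1 := fun t ht =>
    mem_ball_smul (by rwa [Set.uIcc_of_le zero_le_one] at ht) hx₀
  have hD : ∀ t ∈ Set.uIcc (0:ℝ) 1, HasDerivAt (fun s => s^2 * f (s•x₀) i)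
      (2*t*(f (t•x₀) i) + t^2 * ((fderiv ℝ f (t•x₀)) x₀ i)) t := by
    intro t ht
    have h1 : HasDerivAt (fun s : ℝ => s • x₀) x₀ t := by
      simpa using (hasDerivAt_id t).smul_const x₀
    have hdf : DifferentiableAt ℝ f (t • x₀) :=
      (hf.differentiableOn one_ne_zero).differentiableAt (isOpen_ball.mem_nhds (hmem t ht))
    have h2 : HasDerivAt (fun s => f (s • x₀)) (fderiv ℝ f (t•x₀) x₀) t :=
      hdf.hasFDerivAt.comp_hasDerivAt t h1
    have h3 : HasDerivAt (fun s => f (s • x₀) i) ((fderiv ℝ f (t•x₀) x₀) i) t := by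
      exact (EuclideanSpace.proj i).hasFDerivAt.comp_hasDerivAt t h2
    have h4 : HasDerivAt (fun s => s^2 * f (s • x₀) i) _ t := (hasDerivAt_pow 2 t).mul h3
    convert h4 using 1
    push_cast
    ring
  have hsm : ContinuousOn (fun t : ℝ => t • x₀) (Set.uIcc (0:ℝ) 1) :=
    (continuous_id.smul continuous_const).continuousOn
  have hfc : ContinuousOn (fun t => f (t • x₀)) (Set.uIcc (0:ℝ) 1) :=
    (hf.continuousOn).comp hsm hmem
  have hf'c : ContinuousOn (fun t => fderiv ℝ f (t • x₀)) (Set.uIcc (0:ℝ) 1) :=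
    (hf.continuousOn_fderiv_of_isOpen isOpen_ball le_rfl).comp hsm hmem
  have c1 : ContinuousOn (fun t => f (t • x₀) i) (Set.uIcc (0:ℝ) 1) :=
    (EuclideanSpace.proj i).continuous.comp_continuousOn hfc
  have c2 : ContinuousOn (fun t => fderiv ℝ f (t • x₀) x₀ i) (Set.uIcc (0:ℝ) 1) :=
    (EuclideanSpace.proj i).continuous.comp_continuousOn (hf'c.clm_apply continuousOn_const)
  have hcont : ContinuousOn
      (fun t => 2*t*(f (t•x₀) i) + t^2 * ((fderiv ℝ f (t•x₀)) x₀ i)) (Set.uIcc (0:ℝ) 1) :=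
    (((continuous_const.mul continuous_id).continuousOn).mul c1).add
      (((continuous_pow 2).continuousOn).mul c2)
  rw [intervalIntegral.integral_eq_sub_of_hasDerivAt hD hcont.intervalIntegrable]
  norm_num

lemma curl_component {f : E3 → E3} (hf : ContDiffOn ℝ 1 f (ball (0:E3) 1))
    {x₀ : E3} (hx₀ : x₀ ∈ ball (0:E3) 1)
    {F : E3 → E3} (hF : ∀ x, F x = -(∫ t in (0:ℝ)..1, t • cross3 x (f (t • x))))
    (j k i : Fin 3)
    (halg : ∀ t ∈ Set.uIcc (0:ℝ) 1,
      (Kd f t x₀ (EuclideanSpace.single k 1)) j - (Kd f t x₀ (EuclideanSpace.single j 1)) k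
        = 2*t*(f (t•x₀) i) + t^2 * ((fderiv ℝ f (t•x₀)) x₀ i)) :
    pd F j k x₀ - pd F k j x₀ = f x₀ i := by
  have hmem : ∀ t ∈ Set.uIcc (0:ℝ) 1, t • x₀ ∈ ball (0:E3) 1 := fun t ht =>
    mem_ball_smul (by rwa [Set.uIcc_of_le zero_le_one] at ht) hx₀
  have hD : HasFDerivAt F (-(∫ t in (0:ℝ)..1, Kd f t x₀)) x₀ := by
    have hFeq : F = fun x => -(∫ t in (0:ℝ)..1, t • cross3 x (f (t • x))) := funext hF
    rw [hFeq]
    exact (key hf hx₀).neg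
  have hKc : ContinuousOn (fun t => Kd f t x₀) (Set.uIcc (0:ℝ) 1) := continuousOn_Kd hf hmem
  have hKint : IntervalIntegrable (fun t => Kd f t x₀) volume 0 1 := hKc.intervalIntegrable
  have happ : ∀ (j k : Fin 3),
      pd F j k x₀ = -∫ t in (0:ℝ)..1, (Kd f t x₀ (EuclideanSpace.single j 1)) k := by
    intro j k
    have hwc : ContinuousOn (fun t => Kd f t x₀ (EuclideanSpace.single j 1))
        (Set.uIcc (0:ℝ) 1) := hKc.clm_apply continuousOn_const
    have hcc := ContinuousLinearMap.intervalIntegral_comp_comm (EuclideanSpace.proj k)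
      (hwc.intervalIntegrable (μ := volume))
    rw [pd_eq_of_hasFDerivAt hD j k, ContinuousLinearMap.neg_apply,
      ContinuousLinearMap.intervalIntegral_apply hKint, PiLp.neg_apply]
    exact congrArg Neg.neg (by exact hcc.symm)
  have hint : ∀ (j k : Fin 3), IntervalIntegrable
      (fun t => (Kd f t x₀ (EuclideanSpace.single j 1)) k) volume 0 1 := fun j k =>
    ((EuclideanSpace.proj k).continuous.comp_continuousOn
      (hKc.clm_apply continuousOn_const)).intervalIntegrable
  rw [happ j k, happ k j]
  have : -(∫ t in (0:ℝ)..1, (Kd f t x₀ (EuclideanSpace.single j 1)) k)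
      - -(∫ t in (0:ℝ)..1, (Kd f t x₀ (EuclideanSpace.single k 1)) j)
      = ∫ t in (0:ℝ)..1, ((Kd f t x₀ (EuclideanSpace.single k 1)) j
          - (Kd f t x₀ (EuclideanSpace.single j 1)) k) := by
    rw [intervalIntegral.integral_sub (hint k j) (hint j k)]
    ring
  rw [this, intervalIntegral.integral_congr halg, ftc hf hx₀ i]

lemma div3 {f : E3 → E3} (hf : ContDiffOn ℝ 1 f (ball (0:E3) 1))
    (hdiv : ∀ x ∈ ball (0 : E3) 1, (∑ j, pd f j j x) = 0)
    {y : E3} (hy : y ∈ ball (0:E3) 1) :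
    (fderiv ℝ f y (EuclideanSpace.single 0 1)) 0 + (fderiv ℝ f y (EuclideanSpace.single 1 1)) 1
      + (fderiv ℝ f y (EuclideanSpace.single 2 1)) 2 = 0 := by
  have h := hdiv y hy
  rw [Fin.sum_univ_three, pd_f hf hy, pd_f hf hy, pd_f hf hy] at h
  exact h

/-- Poincaré's lemma on the unit ball with the explicit formula: if `f` is a `C¹`
divergence-free vector field on the open unit ball `B₁ ⊂ ℝ³`, then
`F(x) = −∫₀¹ t (x × f(tx)) dt` is differentiable on `B₁` and `∇ × F = f` on `B₁`. -/
theorem curl_of_poincare_formula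
    (f : EuclideanSpace ℝ (Fin 3) → EuclideanSpace ℝ (Fin 3))
    (hf : ContDiffOn ℝ 1 f (ball (0 : EuclideanSpace ℝ (Fin 3)) 1))
    (hdiv : ∀ x ∈ ball (0 : EuclideanSpace ℝ (Fin 3)) 1, (∑ j, pd f j j x) = 0)
    (F : EuclideanSpace ℝ (Fin 3) → EuclideanSpace ℝ (Fin 3))
    (hF : ∀ x, F x = -(∫ t in (0:ℝ)..1, t • cross3 x (f (t • x)))) :
    ∀ x ∈ ball (0 : EuclideanSpace ℝ (Fin 3)) 1,
      DifferentiableAt ℝ F x ∧ curl3 F x = f x := by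
  intro x₀ hx₀
  have hFeq : F = fun x => -(∫ t in (0:ℝ)..1, t • cross3 x (f (t • x))) := funext hF
  constructor
  · rw [hFeq]
    exact ((key hf hx₀).neg).differentiableAt
  · have comp0 : pd F 1 2 x₀ - pd F 2 1 x₀ = f x₀ 0 := by
      refine curl_component hf hx₀ hF 1 2 0 ?_
      intro t ht
      have hy := mem_ball_smul (by rwa [Set.uIcc_of_le zero_le_one] at ht) hx₀
      have hd3 := div3 hf hdiv hy
      rw [Kd_apply, Kd_apply, clm_apply_coord (fderiv ℝ f (t • x₀)) x₀ 0]
      simp [_root_.map_smul, PiLp.smul_apply, smul_eq_mul, cross3_zero, cross3_one,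
        cross3_two, EuclideanSpace.single_apply]
      linear_combination (-(t^2) * x₀ 0) * hd3
    have comp1 : pd F 2 0 x₀ - pd F 0 2 x₀ = f x₀ 1 := by
      refine curl_component hf hx₀ hF 2 0 1 ?_
      intro t ht
      have hy := mem_ball_smul (by rwa [Set.uIcc_of_le zero_le_one] at ht) hx₀
      have hd3 := div3 hf hdiv hy
      rw [Kd_apply, Kd_apply, clm_apply_coord (fderiv ℝ f (t • x₀)) x₀ 1]
      simp [_root_.map_smul, PiLp.smul_apply, smul_eq_mul, cross3_zero, cross3_one,
        cross3_two, EuclideanSpace.single_apply]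
      linear_combination (-(t^2) * x₀ 1) * hd3
    have comp2 : pd F 0 1 x₀ - pd F 1 0 x₀ = f x₀ 2 := by
      refine curl_component hf hx₀ hF 0 1 2 ?_
      intro t ht
      have hy := mem_ball_smul (by rwa [Set.uIcc_of_le zero_le_one] at ht) hx₀
      have hd3 := div3 hf hdiv hy
      rw [Kd_apply, Kd_apply, clm_apply_coord (fderiv ℝ f (t • x₀)) x₀ 2]
      simp [_root_.map_smul, PiLp.smul_apply, smul_eq_mul, cross3_zero, cross3_one,
        cross3_two, EuclideanSpace.single_apply]
      linear_combination (-(t^2) * x₀ 2) * hd3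
    ext i
    fin_cases i
    · exact comp0
    · exact comp1
    · exact comp2
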